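/- Let ℓ and L be real numbers with ℓ ≥ L. Then for every binary vector y : M → ℝ with y ≠ yη, the cut right-hand side satisfies RHS(ℓ, L, y) ≤ L; that is, away from the generating point the integer L-shaped cut imposes no restriction beyond the lower bound θ ≥ L. -/

import Mathlib

/-!
With `S` the support of `yη`, the bracket `∑_{m ∈ S} y m - ∑_{m ∉ S} y m` equals
`|S| - ‖y - yη‖₁` for every `y ∈ [0,1]^M`, so the cut reads `θ ≥ L + (ℓ - L)(1 - ‖y - yη‖₁)`.
Two distinct binary vectors are at `ℓ¹`-distance at least `1`, so away from `yη` the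
right-hand side is at most `L`.
-/

open Finset

def IsBinary {M : Type*} (y : M → ℝ) : Prop := ∀ m, y m = 0 ∨ y m = 1

/-- The right-hand side of the slim integer L-shaped cut generated at `yη`,
with recourse estimate `ℓ` and lower bound `L`, evaluated at `y`. -/
noncomputable def cutRHS {M : Type*} [Fintype M] (yη : M → ℝ) (ℓ L : ℝ) (y : M → ℝ) : ℝ :=
  (ℓ - L) * ((∑ m ∈ Finset.univ.filter (fun m => yη m = 1), y m) -
      ∑ m ∈ Finset.univ.filter (fun m => ¬ yη m = 1), y m)
    - (ℓ - L) * (((Finset.univ.filter (fun m => yη m = 1)).card : ℝ) - 1) + L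

namespace IsBinary

variable {M : Type*} {y z : M → ℝ}

lemma mem_Icc (hy : IsBinary y) (m : M) : y m ∈ Set.Icc 0 1 := by
  rcases hy m with h | h <;> simp [h]

lemma abs_sub_eq_one (hy : IsBinary y) (hz : IsBinary z) {m : M} (hne : y m ≠ z m) :
    |y m - z m| = 1 := by
  rcases hy m with h | h <;> rcases hz m with h' | h' <;> simp_all

lemma one_le_sum_abs_sub [Fintype M] (hy : IsBinary y) (hz : IsBinary z) (hne : y ≠ z) :
    1 ≤ ∑ m, |y m - z m| := by
  obtain ⟨m, hm⟩ := Function.ne_iff.mp hne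
  calc (1 : ℝ) = |y m - z m| := (hy.abs_sub_eq_one hz hm).symm
    _ ≤ ∑ m, |y m - z m| :=
      single_le_sum (f := fun m => |y m - z m|) (fun _ _ => abs_nonneg _) (mem_univ m)

end IsBinary

section Cut

variable {M : Type*} [Fintype M] {yη y : M → ℝ}

lemma sum_support_sub_sum_compl_eq (hyη : IsBinary yη) (hy : ∀ m, y m ∈ Set.Icc 0 1) :
    (∑ m ∈ univ.filter (fun m => yη m = 1), y m) - ∑ m ∈ univ.filter (fun m => ¬ yη m = 1), y m
      = ((univ.filter (fun m => yη m = 1)).card : ℝ) - ∑ m, |y m - yη m| := by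
  have on_support : ∀ m ∈ univ.filter (fun m => yη m = 1), |y m - yη m| = 1 - y m := by
    intro m hm
    rw [(mem_filter.mp hm).2, abs_sub_comm, abs_of_nonneg (by linarith [(hy m).2])]
  have off_support : ∀ m ∈ univ.filter (fun m => ¬ yη m = 1), |y m - yη m| = y m := by
    intro m hm
    rw [(hyη m).resolve_right (mem_filter.mp hm).2, sub_zero, abs_of_nonneg (hy m).1]
  rw [← sum_filter_add_sum_filter_not univ (fun m => yη m = 1), sum_congr rfl on_support,
    sum_congr rfl off_support, sum_sub_distrib, sum_const, nsmul_one]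
  ring

lemma cutRHS_eq (hyη : IsBinary yη) (ℓ L : ℝ) (hy : ∀ m, y m ∈ Set.Icc 0 1) :
    cutRHS yη ℓ L y = L - (ℓ - L) * (∑ m, |y m - yη m| - 1) := by
  rw [cutRHS, sum_support_sub_sum_compl_eq hyη hy]
  ring

end Cut

/-- For `ℓ ≥ L`, at every binary `y ≠ yη` the cut right-hand side is at most `L`:
away from the generating point the cut imposes no restriction beyond `θ ≥ L`. -/
theorem cutRHS_le_lowerBound {M : Type*} [Fintype M]
    (yη : M → ℝ) (hyη : IsBinary yη) (ℓ L : ℝ) (hℓL : ℓ ≥ L)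
    (y : M → ℝ) (hy : IsBinary y) (hne : y ≠ yη) :
    cutRHS yη ℓ L y ≤ L := by
  rw [cutRHS_eq hyη ℓ L hy.mem_Icc]
  have hdist := hy.one_le_sum_abs_sub hyη hne
  have hgap : 0 ≤ ℓ - L := sub_nonneg.mpr hℓL
  linarith [mul_nonneg hgap (sub_nonneg.mpr hdist)]
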